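/- arXiv:1502.01082 — 2 statements merged into one kernel-verified Lean document; each statement's English description precedes it below -/
import Mathlib

section
/- Let t ≥ 1 and y = (-t + √t)/t. If B is the incidence matrix of an SBIBD(4t-1, 2t-1, t-1) and S = B + y(J - B), then S·Sᵀ = ω·I with ω = (2t-1) + 2t·y², and |det S| = ω^((4t-1)/2). -/
open Matrix

/-- The all-ones matrix J. -/
def allOnes (n : ℕ) : Matrix (Fin n) (Fin n) ℝ := Matrix.of fun _ _ => 1

/-!
Writing `S = (1 - y) B + y J`, the relations `B Bᵀ = t I + (t - 1) J`, `B J = J Bᵀ = (2t - 1) J`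
and `J² = (4t - 1) J` give `S Sᵀ = t (1 - y)² I + c J` with `c = (t - 1) + 2ty + ty²`.
The choice of `y` means exactly `t (1 + y)² = 1`, which makes `c = 0` and
`t (1 - y)² = (2t - 1) + 2ty² = ω`. Then `(det S)² = ω ^ (4t - 1)`.
-/

namespace allOnes

variable {n : ℕ}

@[simp]
theorem apply (i j : Fin n) : allOnes n i j = 1 := rfl

theorem transpose : (allOnes n)ᵀ = allOnes n := by
  ext i j
  rfl

theorem mul_self : allOnes n * allOnes n = (n : ℝ) • allOnes n := by
  ext i j
  simp [mul_apply]

theorem mul_eq_smul_of_rowSum {B : Matrix (Fin n) (Fin n) ℝ} {k : ℝ} (hrow : ∀ i, ∑ j, B i j = k) :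
    B * allOnes n = k • allOnes n := by
  ext i j
  simp [mul_apply, hrow i]

theorem mul_transpose_eq_smul_of_rowSum {B : Matrix (Fin n) (Fin n) ℝ} {k : ℝ}
    (hrow : ∀ i, ∑ j, B i j = k) : allOnes n * Bᵀ = k • allOnes n := by
  rw [← transpose, ← transpose_mul, mul_eq_smul_of_rowSum hrow, transpose_smul, transpose]

end allOnes

theorem mul_transpose_of_add_smul_allOnes_sub {n : ℕ} {B : Matrix (Fin n) (Fin n) ℝ}
    {a b k y : ℝ} (hBBt : B * Bᵀ = a • 1 + b • allOnes n) (hrow : ∀ i, ∑ j, B i j = k) :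
    (B + y • (allOnes n - B)) * (B + y • (allOnes n - B))ᵀ =
      ((1 - y) ^ 2 * a) • 1 + ((1 - y) ^ 2 * b + 2 * y * (1 - y) * k + y ^ 2 * n) • allOnes n := by
  have hS : B + y • (allOnes n - B) = (1 - y) • B + y • allOnes n := by module
  rw [hS, transpose_add, transpose_smul, transpose_smul, allOnes.transpose]
  simp only [add_mul, mul_add, Matrix.smul_mul, Matrix.mul_smul, hBBt, allOnes.mul_eq_smul_of_rowSum hrow,
    allOnes.mul_transpose_eq_smul_of_rowSum hrow, allOnes.mul_self]
  module

theorem abs_det_eq_rpow_of_mul_transpose_eq_smul_one {ι : Type*} [Fintype ι] [DecidableEq ι]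
    {S : Matrix ι ι ℝ} {ω : ℝ} (hω : 0 ≤ ω) (hS : S * Sᵀ = ω • 1) :
    |S.det| = ω ^ ((Fintype.card ι : ℝ) / 2) := by
  have hdet_sq : S.det ^ 2 = ω ^ Fintype.card ι := by
    simpa [sq, det_mul, det_transpose, det_smul] using congrArg det hS
  rw [← Real.sqrt_sq_eq_abs, hdet_sq, div_eq_mul_one_div, Real.rpow_mul hω, Real.rpow_natCast,
    Real.sqrt_eq_rpow]

theorem mul_one_add_sq_eq_one {t y : ℝ} (ht : 0 < t) (hy : y = (-t + Real.sqrt t) / t) :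
    t * (1 + y) ^ 2 = 1 := by
  have hsqrt : Real.sqrt t ^ 2 = t := Real.sq_sqrt ht.le
  rw [hy]
  field_simp
  linear_combination hsqrt

theorem stmt_7_general (t : ℕ) (ht : 1 ≤ t) (y : ℝ)
    (hy : y = (-(t:ℝ) + Real.sqrt t) / t)
    (B : Matrix (Fin (4*t-1)) (Fin (4*t-1)) ℝ)
    (hBBt : B * Bᵀ = (t:ℝ) • (1 : Matrix (Fin (4*t-1)) (Fin (4*t-1)) ℝ) +
      ((t:ℝ) - 1) • allOnes (4*t-1))
    (hrow : ∀ i, ∑ j, B i j = 2 * (t:ℝ) - 1)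
    (S : Matrix (Fin (4*t-1)) (Fin (4*t-1)) ℝ)
    (hS : S = B + y • (allOnes (4*t-1) - B)) :
    S * Sᵀ = ((2 * (t:ℝ) - 1) + 2 * (t:ℝ) * y ^ 2) • (1 : Matrix (Fin (4*t-1)) (Fin (4*t-1)) ℝ) ∧
      |S.det| = ((2 * (t:ℝ) - 1) + 2 * (t:ℝ) * y ^ 2) ^ ((4 * (t:ℝ) - 1) / 2) := by
  have ht1 : (1 : ℝ) ≤ t := by exact_mod_cast ht
  have hyt : (t : ℝ) * (1 + y) ^ 2 = 1 := mul_one_add_sq_eq_one (by linarith) hy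
  have hn : ((4 * t - 1 : ℕ) : ℝ) = 4 * t - 1 := by
    rw [Nat.cast_sub (by omega)]
    push_cast
    ring
  have hSSt : S * Sᵀ = ((2 * (t:ℝ) - 1) + 2 * (t:ℝ) * y ^ 2) • 1 := by
    rw [hS, mul_transpose_of_add_smul_allOnes_sub hBBt hrow, hn]
    have hdiag : (1 - y) ^ 2 * t = (2 * (t:ℝ) - 1) + 2 * t * y ^ 2 := by
      linear_combination -hyt
    have hJ : (1 - y) ^ 2 * (t - 1) + 2 * y * (1 - y) * (2 * t - 1) + y ^ 2 * (4 * (t:ℝ) - 1)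
        = 0 := by
      linear_combination hyt
    rw [hdiag, hJ, zero_smul, add_zero]
  refine ⟨hSSt, ?_⟩
  have hω : 0 ≤ (2 * (t:ℝ) - 1) + 2 * t * y ^ 2 :=
    add_nonneg (by linarith) (by positivity)
  rw [abs_det_eq_rpow_of_mul_transpose_eq_smul_one hω hSSt, Fintype.card_fin, hn]

theorem stmt_7 (t : ℕ) (ht : 1 ≤ t) (y : ℝ)
    (hy : y = (-(t:ℝ) + Real.sqrt t) / t)
    (B : Matrix (Fin (4*t-1)) (Fin (4*t-1)) ℝ)
    (h01 : ∀ i j, B i j = 0 ∨ B i j = 1)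
    (hBBt : B * Bᵀ = (t:ℝ) • (1 : Matrix (Fin (4*t-1)) (Fin (4*t-1)) ℝ) +
      ((t:ℝ) - 1) • allOnes (4*t-1))
    (hrow : ∀ i, ∑ j, B i j = 2 * (t:ℝ) - 1)
    (S : Matrix (Fin (4*t-1)) (Fin (4*t-1)) ℝ)
    (hS : S = B + y • (allOnes (4*t-1) - B)) :
    S * Sᵀ = ((2 * (t:ℝ) - 1) + 2 * (t:ℝ) * y ^ 2) • (1 : Matrix (Fin (4*t-1)) (Fin (4*t-1)) ℝ) ∧
      |S.det| = ((2 * (t:ℝ) - 1) + 2 * (t:ℝ) * y ^ 2) ^ ((4 * (t:ℝ) - 1) / 2) :=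
  stmt_7_general t ht y hy B hBBt hrow S hS
end

section
/- Let t ≥ 2 and y = (-t + √t)/(t-1). If B is the incidence matrix of an SBIBD(4t-1, 2t, t), and S = B + y(J - B), then S·Sᵀ = ω·I with ω = 2t + (2t-1)·y², and moreover |y| = (t - √t)/(t-1) ≤ 1. -/
/-!
Since `B` has constant row sums and `B Bᵀ = t I + t J`, the matrix `S = (1 - y) B + y J`
satisfies `S Sᵀ = α I + β J` with `β = (t - 1) y² + 2 t y + t`. The chosen `y` is a root of this
quadratic, so the `J`-part vanishes, and `α` then equals `2t + (2t - 1) y²`.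
-/

open Matrix

lemma allOnes_transpose {n : ℕ} : (allOnes n)ᵀ = allOnes n := by
  ext i j
  simp [allOnes]

lemma allOnes_mul_allOnes {n : ℕ} : allOnes n * allOnes n = (n : ℝ) • allOnes n := by
  ext i j
  simp [allOnes, mul_apply]

section RowSums

variable {n : ℕ} {B : Matrix (Fin n) (Fin n) ℝ} {k : ℝ}

lemma mul_allOnes_of_rowSum (hrow : ∀ i, ∑ j, B i j = k) : B * allOnes n = k • allOnes n := by
  ext i j
  simp [allOnes, mul_apply, hrow i]

lemma allOnes_mul_transpose_of_rowSum (hrow : ∀ i, ∑ j, B i j = k) :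
    allOnes n * Bᵀ = k • allOnes n := by
  rw [← allOnes_transpose, ← transpose_mul, mul_allOnes_of_rowSum hrow, transpose_smul,
    allOnes_transpose]

lemma mul_transpose_add_smul_allOnes_sub {a b y : ℝ} (hrow : ∀ i, ∑ j, B i j = k)
    (hBBt : B * Bᵀ = a • 1 + b • allOnes n) :
    (B + y • (allOnes n - B)) * (B + y • (allOnes n - B))ᵀ =
      ((1 - y) ^ 2 * a) • 1 + ((1 - y) ^ 2 * b + 2 * y * (1 - y) * k + y ^ 2 * n) • allOnes n := by
  have hS : B + y • (allOnes n - B) = (1 - y) • B + y • allOnes n := by module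
  rw [hS, transpose_add, transpose_smul, transpose_smul, allOnes_transpose]
  simp only [add_mul, mul_add, smul_mul_assoc, mul_smul_comm]
  rw [hBBt, mul_allOnes_of_rowSum hrow, allOnes_mul_transpose_of_rowSum hrow, allOnes_mul_allOnes]
  module

end RowSums

section Root

variable {t : ℝ}

lemma quadratic_eq_zero_of_eq_div (ht0 : 0 ≤ t) (ht1 : t ≠ 1) {y : ℝ}
    (hy : y = (-t + √t) / (t - 1)) : (t - 1) * y ^ 2 + 2 * t * y + t = 0 := by
  have hsq : √t ^ 2 = t := Real.sq_sqrt ht0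
  rw [hy]
  field_simp [sub_ne_zero.mpr ht1]
  linear_combination hsq

lemma neg_add_sqrt_div_nonpos (ht : 1 ≤ t) : (-t + √t) / (t - 1) ≤ 0 := by
  have hsqrt : √t ≤ t := Real.sqrt_le_self_iff.mpr (Or.inr ht)
  exact div_nonpos_of_nonpos_of_nonneg (by linarith) (by linarith)

lemma abs_neg_add_sqrt_div (ht : 1 ≤ t) : |(-t + √t) / (t - 1)| = (t - √t) / (t - 1) := by
  rw [abs_of_nonpos (neg_add_sqrt_div_nonpos ht), ← neg_div, neg_add_eq_sub, neg_sub]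

lemma sub_sqrt_div_le_one (ht : 1 < t) : (t - √t) / (t - 1) ≤ 1 := by
  rw [div_le_one (by linarith)]
  linarith [Real.one_le_sqrt.mpr ht.le]

end Root

theorem stmt_8_general (t : ℕ) (ht : 2 ≤ t) (y : ℝ)
    (hy : y = (-(t:ℝ) + Real.sqrt t) / ((t:ℝ) - 1))
    (B : Matrix (Fin (4*t-1)) (Fin (4*t-1)) ℝ)
    (hBBt : B * Bᵀ = (t:ℝ) • (1 : Matrix (Fin (4*t-1)) (Fin (4*t-1)) ℝ) +
      (t:ℝ) • allOnes (4*t-1))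
    (hrow : ∀ i, ∑ j, B i j = 2 * (t:ℝ))
    (S : Matrix (Fin (4*t-1)) (Fin (4*t-1)) ℝ)
    (hS : S = B + y • (allOnes (4*t-1) - B)) :
    S * Sᵀ = (2 * (t:ℝ) + (2 * (t:ℝ) - 1) * y ^ 2) • (1 : Matrix (Fin (4*t-1)) (Fin (4*t-1)) ℝ) ∧
      |y| = ((t:ℝ) - Real.sqrt t) / ((t:ℝ) - 1) ∧ |y| ≤ 1 := by
  have ht' : (1 : ℝ) < t := by exact_mod_cast ht
  have hn : ((4 * t - 1 : ℕ) : ℝ) = 4 * t - 1 := by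
    rw [Nat.cast_sub (by omega)]
    push_cast
    ring
  have hq := quadratic_eq_zero_of_eq_div (Nat.cast_nonneg t) ht'.ne' hy
  have habs : |y| = ((t:ℝ) - Real.sqrt t) / ((t:ℝ) - 1) := hy ▸ abs_neg_add_sqrt_div ht'.le
  refine ⟨?_, habs, habs ▸ sub_sqrt_div_le_one ht'⟩
  rw [hS, mul_transpose_add_smul_allOnes_sub hrow hBBt, hn]
  have hJ : (1 - y) ^ 2 * t + 2 * y * (1 - y) * (2 * t) + y ^ 2 * (4 * t - 1) = 0 := by
    linear_combination hq
  rw [hJ, zero_smul, add_zero]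
  congr 1
  linear_combination -hq

theorem stmt_8 (t : ℕ) (ht : 2 ≤ t) (y : ℝ)
    (hy : y = (-(t:ℝ) + Real.sqrt t) / ((t:ℝ) - 1))
    (B : Matrix (Fin (4*t-1)) (Fin (4*t-1)) ℝ)
    (h01 : ∀ i j, B i j = 0 ∨ B i j = 1)
    (hBBt : B * Bᵀ = (t:ℝ) • (1 : Matrix (Fin (4*t-1)) (Fin (4*t-1)) ℝ) +
      (t:ℝ) • allOnes (4*t-1))
    (hrow : ∀ i, ∑ j, B i j = 2 * (t:ℝ))
    (S : Matrix (Fin (4*t-1)) (Fin (4*t-1)) ℝ)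
    (hS : S = B + y • (allOnes (4*t-1) - B)) :
    S * Sᵀ = (2 * (t:ℝ) + (2 * (t:ℝ) - 1) * y ^ 2) • (1 : Matrix (Fin (4*t-1)) (Fin (4*t-1)) ℝ) ∧
      |y| = ((t:ℝ) - Real.sqrt t) / ((t:ℝ) - 1) ∧ |y| ≤ 1 :=
  stmt_8_general t ht y hy B hBBt hrow S hS
end
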